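/- Let D be an accepting recurrent SCC of B, let d = ⟨q,s⟩ ∈ D, and let w ∈ S* be such that d⇒w is defined, d ∈ d⇒w, and d⇒w is a cut. Then for every d′ ∈ Co(d) with d′ ≠ d, the fibre d′⇒w is empty. -/

import Mathlib

open Matrix MeasureTheory

attribute [local instance] Classical.propDecidable

/-- A Büchi automaton with state space `Q` and alphabet `A`. -/
structure BA (Q A : Type) where
  delta : Q → A → Set Q
  init : Set Q
  acc : Set Q

namespace BA

variable {Q A : Type}

/-- A run of the automaton on an infinite word. -/
def InfRun (𝒜 : BA Q A) (w : ℕ → A) (ρ : ℕ → Q) : Prop :=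
  ρ 0 ∈ 𝒜.init ∧ ∀ i, ρ (i + 1) ∈ 𝒜.delta (ρ i) (w i)

/-- An accepting run: some accepting state occurs infinitely often. -/
def AccRun (𝒜 : BA Q A) (w : ℕ → A) (ρ : ℕ → Q) : Prop :=
  𝒜.InfRun w ρ ∧ ∃ q ∈ 𝒜.acc, {i : ℕ | ρ i = q}.Infinite

/-- The language of infinite words having at least one accepting run. -/
def Lang (𝒜 : BA Q A) : Set (ℕ → A) := {w | ∃ ρ, 𝒜.AccRun w ρ}

/-- Unambiguous: every infinite word has at most one accepting run. -/
def Unambiguous (𝒜 : BA Q A) : Prop :=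
  ∀ w ρ₁ ρ₂, 𝒜.AccRun w ρ₁ → 𝒜.AccRun w ρ₂ → ρ₁ = ρ₂

/-- `𝒜.IsRun q w ρ r` : the list `ρ` (of length `|w| + 1`) is a run for the
finite word `w` from `q` to `r`. -/
def IsRun (𝒜 : BA Q A) : Q → List A → List Q → Q → Prop
  | q, [], ρ, r => q = r ∧ ρ = [q]
  | q, a :: w, ρ, r => ∃ q' ρ', ρ = q :: ρ' ∧ q' ∈ 𝒜.delta q a ∧ 𝒜.IsRun q' w ρ' r

/-- A diamond: two distinct runs for the same finite word with the
same start and end states. -/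
def HasDiamond (𝒜 : BA Q A) : Prop :=
  ∃ q r w ρ₁ ρ₂, ρ₁ ≠ ρ₂ ∧ 𝒜.IsRun q w ρ₁ r ∧ 𝒜.IsRun q w ρ₂ r

/-- Every state is reachable from some initial state. -/
def AllReachable (𝒜 : BA Q A) : Prop :=
  ∀ q, ∃ q₀ ∈ 𝒜.init, ∃ w ρ, 𝒜.IsRun q₀ w ρ q

/-- The automaton `𝒜` with `q` as the only initial state. -/
def fromState (𝒜 : BA Q A) (q : Q) : BA Q A := { 𝒜 with init := {q} }

/-- `|δ|`: the number of pairs `(q, r)` such that `r ∈ δ(q, a)` for some letter `a`. -/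
noncomputable def numTrans (𝒜 : BA Q A) : ℕ := {p : Q × Q | ∃ a, p.2 ∈ 𝒜.delta p.1 a}.ncard

end BA

/-- A (row-)stochastic matrix with nonnegative entries. -/
def IsMarkov {S : Type} [Fintype S] (M : Matrix S S ℝ) : Prop :=
  (∀ s t, 0 ≤ M s t) ∧ ∀ s, ∑ t, M s t = 1

/-- `Pr s` is the probability measure of the Markov chain `M` started at `s`:
the cylinder of the finite sequence `u 0, …, u n` has measure
`M (u 0) (u 1) ⋯ M (u (n-1)) (u n)` if `u 0 = s`, and `0` otherwise. -/
def CylinderSpec {S : Type} [Fintype S] [MeasurableSpace S]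
    (M : Matrix S S ℝ) (Pr : S → Measure (ℕ → S)) : Prop :=
  ∀ (s : S) (n : ℕ) (u : ℕ → S),
    Pr s {ω | ∀ i ≤ n, ω i = u i} =
      if u 0 = s then ENNReal.ofReal (∏ i ∈ Finset.range n, M (u i) (u (i + 1))) else 0

/-- The vector `z`, given by `z ⟨q, s⟩ = Pr_s (L(𝒜_q))`. -/
noncomputable def zvec {Q S : Type} [MeasurableSpace S]
    (𝒜 : BA Q S) (Pr : S → Measure (ℕ → S)) : Q × S → ℝ :=
  fun p => ((Pr p.2) ((𝒜.fromState p.1).Lang)).toReal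

/-- The matrix `B` built from the automaton `𝒜` and the Markov chain `M`. -/
noncomputable def Bmat {Q S : Type} (𝒜 : BA Q S) (M : Matrix S S ℝ) :
    Matrix (Q × S) (Q × S) ℝ :=
  Matrix.of fun p p' => if p'.1 ∈ 𝒜.delta p.1 p.2 then M p.2 p'.2 else 0

/-- The spectral radius of a real square matrix: the largest absolute value of
its complex eigenvalues. -/
noncomputable def specRad {n : Type} [Fintype n] [DecidableEq n] (N : Matrix n n ℝ) : ℝ :=
  sSup {x : ℝ | ∃ c ∈ spectrum ℂ (N.map Complex.ofReal), x = ‖c‖}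

/-- `D` is a strongly connected component of the graph of the nonnegative matrix `N`
(edges are the positive entries). -/
def IsSCC {V : Type} (N : Matrix V V ℝ) (D : Set V) : Prop :=
  ∃ v, D = {w | Relation.ReflTransGen (fun a b => 0 < N a b) v w ∧
               Relation.ReflTransGen (fun a b => 0 < N a b) w v}

/-- The submatrix `N_{D,D}`. -/
def subMat {V : Type} (N : Matrix V V ℝ) (D : Set V) : Matrix ↥D ↥D ℝ :=
  N.submatrix (Subtype.val) (Subtype.val)

/-- An SCC `D` of `B` is recurrent if `ρ(B_{D,D}) = 1`. -/
def RecurrentSCC {Q S : Type} [Fintype Q] [Fintype S]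
    (𝒜 : BA Q S) (M : Matrix S S ℝ) (D : Set (Q × S)) : Prop :=
  specRad (subMat (Bmat 𝒜 M) D) = 1

/-- An SCC `D` of `B` is accepting if it contains a pair `⟨q, s⟩` with `q` accepting. -/
def AcceptingSCC {Q S : Type} (𝒜 : BA Q S) (D : Set (Q × S)) : Prop :=
  ∃ p ∈ D, p.1 ∈ 𝒜.acc

/-- One step of the fibre operation: `f ⇒ t`. -/
def fibStep {Q S : Type} (𝒜 : BA Q S) (D : Set (Q × S)) (f : Set (Q × S)) (t : S) :
    Set (Q × S) :=
  {p ∈ D | p.2 = t ∧ ∃ e ∈ f, p.1 ∈ 𝒜.delta e.1 e.2}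

/-- The fibre operation along a word: `f ⇒ w`. -/
def fibRun {Q S : Type} (𝒜 : BA Q S) (D : Set (Q × S)) (f : Set (Q × S)) :
    List S → Set (Q × S)
  | [] => f
  | t :: w => fibRun 𝒜 D (fibStep 𝒜 D f t) w

/-- A word `s₁ ⋯ sₙ` is enabled if `M_{sᵢ, sᵢ₊₁} > 0` for all `i < n`. -/
def Enabled {S : Type} (M : Matrix S S ℝ) (l : List S) : Prop :=
  l.Chain' fun a b => 0 < M a b

/-- `c` is a cut: `c = d ⇒ v` for some `d ∈ D` and enabled `v`, and `c ⇒ w`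
is nonempty for every `w` for which it is defined. -/
def IsCut {Q S : Type} (𝒜 : BA Q S) (M : Matrix S S ℝ) (D : Set (Q × S))
    (c : Set (Q × S)) : Prop :=
  ∃ d ∈ D, ∃ v : List S, Enabled M (d.2 :: v) ∧ c = fibRun 𝒜 D {d} v ∧
    ∀ w : List S, Enabled M (v.getLastD d.2 :: w) → fibRun 𝒜 D c w ≠ ∅

/-- The co-reachability set `Co(d)`: those `e ∈ D` with `{d, e} ⊆ d ⇒ w` for some `w`. -/
def Co {Q S : Type} (𝒜 : BA Q S) (M : Matrix S S ℝ) (D : Set (Q × S)) (d : Q × S) :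
    Set (Q × S) :=
  {e ∈ D | ∃ w : List S, Enabled M (d.2 :: w) ∧
    d ∈ fibRun 𝒜 D {d} w ∧ e ∈ fibRun 𝒜 D {d} w}

/-- The matrix `Δ(t)` over `D`. -/
noncomputable def Delta {Q S : Type} (𝒜 : BA Q S) (M : Matrix S S ℝ) (D : Set (Q × S))
    (t : S) : Matrix ↥D ↥D ℝ :=
  Matrix.of fun p p' =>
    if (p' : Q × S).2 = t ∧ 0 < M (p : Q × S).2 t ∧
       (p' : Q × S).1 ∈ 𝒜.delta (p : Q × S).1 (p : Q × S).2
    then 1 else 0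

/-- The matrix `Δ(w)` for a word `w` (`Δ(ε)` is the identity). -/
noncomputable def DeltaW {Q S : Type} [Fintype Q] [Fintype S]
    (𝒜 : BA Q S) (M : Matrix S S ℝ) (D : Set (Q × S)) : List S → Matrix ↥D ↥D ℝ
  | [] => 1
  | t :: w => Delta 𝒜 M D t * DeltaW 𝒜 M D w

/-- The matrix `Δ′(t)` over `D`. -/
noncomputable def Delta' {Q S : Type} (D : Set (Q × S)) (t : S) : Matrix ↥D ↥D ℝ :=
  Matrix.of fun p p' => if p = p' ∧ (p : Q × S).2 = t then 1 else 0

/-- The vector space `V(s)` spanned by the vectors `Δ′(s) Δ(w) y` for all words `w`. -/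
noncomputable def Vspace {Q S : Type} [Fintype Q] [Fintype S]
    (𝒜 : BA Q S) (M : Matrix S S ℝ) (D : Set (Q × S)) (y : ↥D → ℝ) (s : S) :
    Submodule ℝ (↥D → ℝ) :=
  Submodule.span ℝ {x : ↥D → ℝ | ∃ w : List S, x = (Delta' D s * DeltaW 𝒜 M D w).mulVec y}

/-- A vector `μ ∈ ℝ^D` is a fibre over `s` if it vanishes outside `Q × {s}`. -/
def IsFibreVec {Q S : Type} (D : Set (Q × S)) (μ : ↥D → ℝ) (s : S) : Prop :=
  ∀ p : ↥D, (p : Q × S).2 ≠ s → μ p = 0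

/-- A pseudo-cut over `s` (with respect to the vector `zD`): a fibre `μ` over `s` with
`μᵀ Δ(w) zD = μᵀ zD` for all `w` such that `s w` is enabled. -/
def IsPseudoCut {Q S : Type} [Fintype Q] [Fintype S]
    (𝒜 : BA Q S) (M : Matrix S S ℝ) (D : Set (Q × S)) (zD : ↥D → ℝ)
    (μ : ↥D → ℝ) (s : S) : Prop :=
  IsFibreVec D μ s ∧
  ∀ w : List S, Enabled M (s :: w) → μ ⬝ᵥ (DeltaW 𝒜 M D w).mulVec zD = μ ⬝ᵥ zD

/-- A `Co(d)`-pseudo-cut: a pseudo-cut over `d.2` that is nonzero at `d` and vanishes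
outside `Co(d)`. -/
def IsCoPseudoCut {Q S : Type} [Fintype Q] [Fintype S]
    (𝒜 : BA Q S) (M : Matrix S S ℝ) (D : Set (Q × S)) (zD : ↥D → ℝ)
    (d : Q × S) (hd : d ∈ D) (μ : ↥D → ℝ) : Prop :=
  IsPseudoCut 𝒜 M D zD μ d.2 ∧ μ ⟨d, hd⟩ ≠ 0 ∧
  ∀ e : ↥D, (e : Q × S) ∉ Co 𝒜 M D d → μ e = 0

/-- Auxiliary order: shortlex on reversed words. -/
def revLT {S : Type} [LinearOrder S] : List S → List S → Prop
  | [], u => u ≠ []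
  | _ :: _, [] => False
  | a :: v, b :: w =>
      (a :: v).length < (b :: w).length ∨
      ((a :: v).length = (b :: w).length ∧ (a < b ∨ (a = b ∧ revLT v w)))

/-- The order `≪` on words: shortlex, but with words read from right to left. -/
def wordLT {S : Type} [LinearOrder S] (u v : List S) : Prop :=
  revLT u.reverse v.reverse

/-!
Suppose `e ∈ d' ⇒ w` for some `d' ≠ d` in `Co(d)`. Take `u` with `d, d' ∈ d ⇒ u`, and, `D` being
strongly connected, a word `y` with `d ∈ e ⇒ y`. For every enabled `W`, the fibre `d ⇒ u w y W`
then contains both `d ⇒ w y W`, which is non-empty because `d ⇒ w` is a cut, and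
`d' ⇒ w y W ⊇ e ⇒ y W ⊇ d ⇒ W`. These two sets are disjoint, as a common element would yield two
runs of `u w y W` that differ at `d` and `d'`, i.e. a diamond. Hence `|d ⇒ u w y W| > |d ⇒ W|`,
which is absurd for `W` maximising `|d ⇒ W|` (a number bounded by `|Q × S|`).
-/

namespace BA

variable {Q A : Type} {𝒜 : BA Q A}

lemma IsRun.exists_eq_cons {q r : Q} {w : List A} {ρ : List Q} (h : 𝒜.IsRun q w ρ r) :
    ∃ ρ', ρ = q :: ρ' := by
  cases w with
  | nil => exact ⟨[], h.2⟩
  | cons a w => obtain ⟨_, ρ', rfl, -, -⟩ := h; exact ⟨ρ', rfl⟩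

lemma IsRun.length_eq {w : List A} :
    ∀ {q r : Q} {ρ : List Q}, 𝒜.IsRun q w ρ r → ρ.length = w.length + 1 := by
  induction w with
  | nil => rintro q r ρ ⟨-, rfl⟩; rfl
  | cons a w ih =>
    rintro q r ρ ⟨_, ρ', rfl, -, h⟩
    simp [ih h]

lemma IsRun.append {w₁ : List A} :
    ∀ {q m r : Q} {w₂ : List A} {ρ₁ ρ₂ : List Q}, 𝒜.IsRun q w₁ ρ₁ m → 𝒜.IsRun m w₂ ρ₂ r →
      𝒜.IsRun q (w₁ ++ w₂) (ρ₁.dropLast ++ ρ₂) r := by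
  induction w₁ with
  | nil => rintro q m r w₂ ρ₁ ρ₂ ⟨rfl, rfl⟩ h₂; exact h₂
  | cons a w ih =>
    rintro q m r w₂ ρ₁ ρ₂ ⟨q', ρ', rfl, hδ, h₁⟩ h₂
    obtain ⟨ρ'', rfl⟩ := h₁.exists_eq_cons
    exact ⟨q', (q' :: ρ'').dropLast ++ ρ₂, rfl, hδ, ih h₁ h₂⟩

end BA

section Fibres

variable {Q S : Type} {𝒜 : BA Q S} {D : Set (Q × S)} {M : Matrix S S ℝ}

lemma fibRun_append (f : Set (Q × S)) (v₁ v₂ : List S) :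
    fibRun 𝒜 D f (v₁ ++ v₂) = fibRun 𝒜 D (fibRun 𝒜 D f v₁) v₂ := by
  induction v₁ generalizing f with
  | nil => rfl
  | cons t v ih => exact ih _

lemma fibStep_mono {f g : Set (Q × S)} (h : f ⊆ g) (t : S) :
    fibStep 𝒜 D f t ⊆ fibStep 𝒜 D g t := by
  rintro p ⟨hD, ht, e, he, hδ⟩
  exact ⟨hD, ht, e, h he, hδ⟩

lemma fibRun_mono {f g : Set (Q × S)} (h : f ⊆ g) (v : List S) :
    fibRun 𝒜 D f v ⊆ fibRun 𝒜 D g v := by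
  induction v generalizing f g with
  | nil => exact h
  | cons t v ih => exact ih (fibStep_mono h t)

lemma fibRun_singleton_subset {f : Set (Q × S)} {p : Q × S} {u : List S}
    (hp : p ∈ fibRun 𝒜 D f u) (v : List S) :
    fibRun 𝒜 D {p} v ⊆ fibRun 𝒜 D f (u ++ v) := by
  rw [fibRun_append]
  exact fibRun_mono (Set.singleton_subset_iff.mpr hp) v

lemma fibRun_subset {f : Set (Q × S)} (hf : f ⊆ D) (v : List S) : fibRun 𝒜 D f v ⊆ D := by
  induction v generalizing f with
  | nil => exact hf
  | cons t v ih => exact ih fun _ hp => hp.1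

lemma snd_eq_getLastD_of_mem_fibRun {f : Set (Q × S)} {s : S} (hf : ∀ p ∈ f, p.2 = s)
    {v : List S} {g : Q × S} (hg : g ∈ fibRun 𝒜 D f v) : g.2 = v.getLastD s := by
  induction v generalizing f s with
  | nil => exact hf g hg
  | cons t v ih =>
    rw [List.getLastD_cons]
    exact ih (fun _ hp => hp.2.1) hg

lemma snd_eq_getLastD_of_mem_fibRun_singleton {p g : Q × S} {v : List S}
    (hg : g ∈ fibRun 𝒜 D {p} v) : g.2 = v.getLastD p.2 :=
  snd_eq_getLastD_of_mem_fibRun (fun _ hq => congrArg Prod.snd hq) hg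

/-- The run reads `(p.2 :: v).dropLast`, not `v`: the letter of a pair is read when leaving it. -/
lemma exists_isRun_of_mem_fibRun {f : Set (Q × S)} {v : List S} {g : Q × S}
    (hg : g ∈ fibRun 𝒜 D f v) : ∃ p ∈ f, ∃ ρ, 𝒜.IsRun p.1 (p.2 :: v).dropLast ρ g.1 := by
  induction v generalizing f with
  | nil => exact ⟨g, hg, [g.1], rfl, rfl⟩
  | cons t v ih =>
    obtain ⟨p', ⟨-, rfl, p, hp, hδ⟩, ρ', hρ'⟩ := ih hg
    exact ⟨p, hp, p.1 :: ρ', p'.1, ρ', rfl, hδ, hρ'⟩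

lemma exists_isRun_of_mem_fibRun_singleton {p g : Q × S} {v : List S}
    (hg : g ∈ fibRun 𝒜 D {p} v) : ∃ ρ, 𝒜.IsRun p.1 (p.2 :: v).dropLast ρ g.1 := by
  obtain ⟨_, rfl, h⟩ := exists_isRun_of_mem_fibRun hg
  exact h

lemma disjoint_fibRun_of_not_hasDiamond (hND : ¬ 𝒜.HasDiamond) {c p p' : Q × S} {u : List S}
    (hp : p ∈ fibRun 𝒜 D {c} u) (hp' : p' ∈ fibRun 𝒜 D {c} u) (hne : p ≠ p') (v : List S) :
    Disjoint (fibRun 𝒜 D {p} v) (fibRun 𝒜 D {p'} v) := by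
  have hsnd : p.2 = p'.2 := by
    rw [snd_eq_getLastD_of_mem_fibRun_singleton hp, snd_eq_getLastD_of_mem_fibRun_singleton hp']
  have hfst : p.1 ≠ p'.1 := fun h => hne (Prod.ext h hsnd)
  rw [Set.disjoint_left]
  intro g hg hg'
  obtain ⟨ρ₁, hρ₁⟩ := exists_isRun_of_mem_fibRun_singleton hp
  obtain ⟨ρ₁', hρ₁'⟩ := exists_isRun_of_mem_fibRun_singleton hp'
  obtain ⟨ρ₂, hρ₂⟩ := exists_isRun_of_mem_fibRun_singleton hg
  obtain ⟨ρ₂', hρ₂'⟩ := exists_isRun_of_mem_fibRun_singleton hg'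
  rw [← hsnd] at hρ₂'
  refine hND ⟨c.1, g.1, _, _, _, fun heq => hfst ?_, hρ₁.append hρ₂, hρ₁'.append hρ₂'⟩
  obtain ⟨τ, rfl⟩ := hρ₂.exists_eq_cons
  obtain ⟨τ', rfl⟩ := hρ₂'.exists_eq_cons
  have hlen : ρ₁.dropLast.length = ρ₁'.dropLast.length := by
    simp [hρ₁.length_eq, hρ₁'.length_eq]
  exact List.head_eq_of_cons_eq (List.append_inj_right heq hlen)

lemma Enabled.append {s t : S} {v₁ v₂ : List S} (h₁ : Enabled M (s :: v₁))
    (hlast : v₁.getLastD s = t) (h₂ : Enabled M (t :: v₂)) : Enabled M (s :: (v₁ ++ v₂)) := by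
  induction v₁ generalizing s with
  | nil => subst hlast; exact h₂
  | cons a v ih =>
    obtain ⟨hsa, h₁⟩ := List.isChain_cons_cons.mp h₁
    exact List.isChain_cons_cons.mpr ⟨hsa, ih h₁ (List.getLastD_cons ▸ hlast)⟩

lemma IsCut.fibRun_nonempty {c : Set (Q × S)} (hc : IsCut 𝒜 M D c) {p : Q × S} (hp : p ∈ c)
    {v : List S} (hv : Enabled M (p.2 :: v)) : (fibRun 𝒜 D c v).Nonempty := by
  obtain ⟨d, -, u, -, rfl, hcut⟩ := hc
  rw [snd_eq_getLastD_of_mem_fibRun_singleton hp] at hv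
  exact Set.nonempty_iff_ne_empty.mpr (hcut v hv)

lemma Bmat_pos_iff {p p' : Q × S} :
    0 < Bmat 𝒜 M p p' ↔ p'.1 ∈ 𝒜.delta p.1 p.2 ∧ 0 < M p.2 p'.2 := by
  by_cases h : p'.1 ∈ 𝒜.delta p.1 p.2 <;> simp [Bmat, h]

lemma IsSCC.exists_mem_fibRun (hD : IsSCC (Bmat 𝒜 M) D) {a b : Q × S} (ha : a ∈ D)
    (hb : b ∈ D) : ∃ y, Enabled M (a.2 :: y) ∧ b ∈ fibRun 𝒜 D {a} y := by
  obtain ⟨v₀, hD⟩ := hD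
  set R : Q × S → Q × S → Prop := fun p p' => 0 < Bmat 𝒜 M p p'
  have hmem (p : Q × S) : p ∈ D ↔ Relation.ReflTransGen R v₀ p ∧ Relation.ReflTransGen R p v₀ :=
    hD ▸ Iff.rfl
  have path : ∀ z, Relation.ReflTransGen R a z → Relation.ReflTransGen R z v₀ →
      ∃ y, Enabled M (a.2 :: y) ∧ z ∈ fibRun 𝒜 D {a} y := by
    intro z haz
    induction haz with
    | refl => exact fun _ => ⟨[], List.isChain_singleton _, rfl⟩
    | @tail z z' haz hzz' ih =>
      intro hz'v
      obtain ⟨y, hy, hzy⟩ := ih (.head hzz' hz'v)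
      have hδ := Bmat_pos_iff.mp hzz'
      refine ⟨y ++ [z'.2], hy.append (snd_eq_getLastD_of_mem_fibRun_singleton hzy).symm
        (List.isChain_pair.mpr hδ.2), ?_⟩
      rw [fibRun_append]
      exact ⟨(hmem z').mpr ⟨((hmem a).mp ha).1.trans (haz.tail hzz'), hz'v⟩, rfl, z, hzy, hδ.1⟩
  exact path b (((hmem a).mp ha).2.trans ((hmem b).mp hb).1) ((hmem b).mp hb).2

end Fibres

lemma exists_max_of_bounded {α : Type*} {p : α → Prop} {f : α → ℕ} {N : ℕ}
    (hbdd : ∀ a, p a → f a ≤ N) (hp : ∃ a, p a) : ∃ a, p a ∧ ∀ b, p b → f b ≤ f a := by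
  have hne : (f '' {a | p a}).Nonempty := Set.Nonempty.image f hp
  have hbdd' : BddAbove (f '' {a | p a}) := ⟨N, by rintro _ ⟨a, ha, rfl⟩; exact hbdd a ha⟩
  obtain ⟨a, ha, hmax⟩ := Nat.sSup_mem hne hbdd'
  exact ⟨a, ha, fun b hb => hmax ▸ le_csSup hbdd' ⟨b, hb, rfl⟩⟩

lemma ncard_fibRun_lt_of_branch {Q S : Type} [Finite Q] [Finite S] {𝒜 : BA Q S}
    {D : Set (Q × S)} (hND : ¬ 𝒜.HasDiamond) {d d' e : Q × S} {u w y W : List S}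
    (hdu : d ∈ fibRun 𝒜 D {d} u) (hd'u : d' ∈ fibRun 𝒜 D {d} u) (hne : d' ≠ d)
    (he : e ∈ fibRun 𝒜 D {d'} w) (hdy : d ∈ fibRun 𝒜 D {e} y)
    (hcut : (fibRun 𝒜 D {d} (w ++ (y ++ W))).Nonempty) :
    (fibRun 𝒜 D {d} W).ncard < (fibRun 𝒜 D {d} (u ++ (w ++ (y ++ W)))).ncard := by
  have hback : fibRun 𝒜 D {d} W ⊆ fibRun 𝒜 D {d'} (w ++ (y ++ W)) :=
    (fibRun_singleton_subset hdy W).trans (fibRun_singleton_subset he _)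
  have hunion : fibRun 𝒜 D {d} (w ++ (y ++ W)) ∪ fibRun 𝒜 D {d'} (w ++ (y ++ W)) ⊆
      fibRun 𝒜 D {d} (u ++ (w ++ (y ++ W))) :=
    Set.union_subset (fibRun_singleton_subset hdu _) (fibRun_singleton_subset hd'u _)
  calc (fibRun 𝒜 D {d} W).ncard
      ≤ (fibRun 𝒜 D {d'} (w ++ (y ++ W))).ncard := Set.ncard_le_ncard hback
    _ < (fibRun 𝒜 D {d} (w ++ (y ++ W))).ncard + (fibRun 𝒜 D {d'} (w ++ (y ++ W))).ncard := by
        have := (Set.ncard_pos (Set.toFinite _)).mpr hcut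
        omega
    _ = (fibRun 𝒜 D {d} (w ++ (y ++ W)) ∪ fibRun 𝒜 D {d'} (w ++ (y ++ W))).ncard :=
        (Set.ncard_union_eq (disjoint_fibRun_of_not_hasDiamond hND hdu hd'u hne.symm _)).symm
    _ ≤ (fibRun 𝒜 D {d} (u ++ (w ++ (y ++ W)))).ncard := Set.ncard_le_ncard hunion

theorem stmt_8_general {Q S : Type} [Fintype Q] [Fintype S]
    (𝒜 : BA Q S) (M : Matrix S S ℝ)
    (hND : ¬ 𝒜.HasDiamond)
    (D : Set (Q × S)) (hD : IsSCC (Bmat 𝒜 M) D)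
    (d : Q × S) (hd : d ∈ D)
    (w : List S) (hwdef : Enabled M (d.2 :: w))
    (hdin : d ∈ fibRun 𝒜 D {d} w)
    (hcut : IsCut 𝒜 M D (fibRun 𝒜 D {d} w)) :
    ∀ d' ∈ Co 𝒜 M D d, d' ≠ d → fibRun 𝒜 D {d'} w = ∅ := by
  rintro d' ⟨hd'D, u, hu, hdu, hd'u⟩ hne
  by_contra hw
  obtain ⟨e, he⟩ := Set.nonempty_iff_ne_empty.mpr hw
  have hlast {v : List S} (h : d ∈ fibRun 𝒜 D {d} v) : v.getLastD d.2 = d.2 :=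
    (snd_eq_getLastD_of_mem_fibRun_singleton h).symm
  have he2 : e.2 = d.2 := by
    rw [snd_eq_getLastD_of_mem_fibRun_singleton he, snd_eq_getLastD_of_mem_fibRun_singleton hd'u,
      hlast hdu, hlast hdin]
  obtain ⟨y, hy, hdy⟩ := hD.exists_mem_fibRun
    (fibRun_subset (Set.singleton_subset_iff.mpr hd'D) w he) hd
  obtain ⟨W, hW, hmax⟩ := exists_max_of_bounded (p := fun W => Enabled M (d.2 :: W))
    (fun W _ => Set.ncard_le_card (fibRun 𝒜 D {d} W)) ⟨[], List.isChain_singleton _⟩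
  have hyW : Enabled M (d.2 :: (y ++ W)) :=
    he2 ▸ hy.append (snd_eq_getLastD_of_mem_fibRun_singleton hdy).symm hW
  have hcutW : (fibRun 𝒜 D {d} (w ++ (y ++ W))).Nonempty :=
    fibRun_append {d} w (y ++ W) ▸ hcut.fibRun_nonempty hdin hyW
  exact absurd (ncard_fibRun_lt_of_branch hND hdu hd'u hne he hdy hcutW)
    (not_lt.mpr (hmax _ (hu.append (hlast hdu) (hwdef.append (hlast hdin) hyW))))

/-- if `d⇒w` is a cut containing `d`, then `d'⇒w = ∅` for every
`d' ∈ Co(d)` other than `d`. -/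
theorem stmt_8 {Q S : Type} [Fintype Q] [Fintype S]
    (𝒜 : BA Q S) (M : Matrix S S ℝ) (hM : IsMarkov M)
    (hU : 𝒜.Unambiguous) (hND : ¬ 𝒜.HasDiamond) (hAR : 𝒜.AllReachable)
    (D : Set (Q × S)) (hD : IsSCC (Bmat 𝒜 M) D)
    (hrec : RecurrentSCC 𝒜 M D) (hacc : AcceptingSCC 𝒜 D)
    (d : Q × S) (hd : d ∈ D)
    (w : List S) (hwdef : Enabled M (d.2 :: w))
    (hdin : d ∈ fibRun 𝒜 D {d} w)
    (hcut : IsCut 𝒜 M D (fibRun 𝒜 D {d} w)) :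
    ∀ d' ∈ Co 𝒜 M D d, d' ≠ d → fibRun 𝒜 D {d'} w = ∅ :=
  stmt_8_general 𝒜 M hND D hD d hd w hwdef hdin hcut
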